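/- Let S_{2,2,1} be the spider on 6 vertices with two legs of two edges each and one leg of one edge. Then for every n ≥ 6, ex_c(n, S_{2,2,1}) = 2n − 3. -/

import Mathlib

open SimpleGraph

/-- `G` contains a copy of `F`, i.e. a subgraph isomorphic to `F`
(given by an injective graph homomorphism). -/
def ContainsCopy {α β : Type*} (F : SimpleGraph α) (G : SimpleGraph β) : Prop :=
  ∃ f : α ↪ β, ∀ ⦃a b : α⦄, F.Adj a b → G.Adj (f a) (f b)

/-- The connected Turán number `ex_c(n, F)`: the maximum number of edges of a
connected `F`-free simple graph on `n` vertices. -/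
noncomputable def exConn {α : Type*} (n : ℕ) (F : SimpleGraph α) : ℕ :=
  sSup {m | ∃ G : SimpleGraph (Fin n), G.Connected ∧ ¬ ContainsCopy F G ∧ m = G.edgeSet.ncard}

/-- The spider `S_{2,2,1}` on 6 vertices: center `0`, two legs `0-1-2` and `0-3-4` of two
edges each, and one leg `0-5` of one edge. -/
def spider221 : SimpleGraph (Fin 6) :=
  SimpleGraph.fromRel (fun i j =>
    (i = 0 ∧ j = 1) ∨ (i = 1 ∧ j = 2) ∨ (i = 0 ∧ j = 3) ∨ (i = 3 ∧ j = 4) ∨ (i = 0 ∧ j = 5))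


/-!
The lower bound is the book graph: two adjacent hubs, each joined to every other vertex. It has
`2n - 3` edges and contains no `S_{2,2,1}`, since the three pairwise disjoint edges `a₁a₂`, `b₁b₂`,
`cd` of a spider would each have to contain a hub.

The upper bound is by induction on `n`. A connected graph with at least six vertices and minimum
degree at least three contains the spider: all neighbours of an end `x₀` of a longest path
`x₀x₁⋯` lie on the path, and the resulting cycle through `x₀`, together with a chord or with an
edge leaving it, carries a spider. So a connected spider-free graph has a vertex `v` of degree one
or two. Deleting `v` after joining its neighbours `a, b` keeps the graph connected and spider-free
(a spider through the new edge `ab` can be rerouted along `a v b`) and loses at most two edges.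
For `n = 6` the induction cannot start from five vertices, where `K₅` is spider-free. Instead, ten
edges would leave at most two non-edges in `G - v`; this gives a universal vertex `y` of `G - v`
other than some neighbour `x` of `v`, and an edge `αβ` among the three remaining vertices
`α, β, γ`, so that `y` is the centre of the spider with legs `y x v`, `y α β` and pendant `γ`.
-/

open Finset

universe u

namespace SimpleGraph

variable {V : Type*} {G : SimpleGraph V}

def HasSpider221 (G : SimpleGraph V) : Prop :=
  ∃ c a₁ a₂ b₁ b₂ d : V, [c, a₁, a₂, b₁, b₂, d].Nodup ∧
    G.Adj c a₁ ∧ G.Adj a₁ a₂ ∧ G.Adj c b₁ ∧ G.Adj b₁ b₂ ∧ G.Adj c d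

theorem containsCopy_spider221_iff : ContainsCopy spider221 G ↔ G.HasSpider221 := by
  constructor
  · rintro ⟨f, hf⟩
    exact ⟨f 0, f 1, f 2, f 3, f 4, f 5, List.nodup_ofFn.2 f.injective,
      hf (by simp [spider221]), hf (by simp [spider221]), hf (by simp [spider221]),
      hf (by simp [spider221]), hf (by simp [spider221])⟩
  · rintro ⟨c, a₁, a₂, b₁, b₂, d, hnd, h₁, h₂, h₃, h₄, h₅⟩
    refine ⟨⟨![c, a₁, a₂, b₁, b₂, d], List.nodup_ofFn.1 hnd⟩, fun i j hij => ?_⟩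
    fin_cases i <;> fin_cases j <;> simp_all [spider221, fromRel_adj, G.adj_comm]

section Counting

theorem ncard_edgeSet_eq_card_edgeFinset [Fintype G.edgeSet] :
    G.edgeSet.ncard = #G.edgeFinset := by
  rw [← coe_edgeFinset, Set.ncard_coe_finset]

theorem ncard_edgeSet_induce_compl_singleton_add_degree [Fintype V] [DecidableRel G.Adj]
    (v : V) : (G.induce {v}ᶜ).edgeSet.ncard + G.degree v = G.edgeSet.ncard := by
  classical
  rw [ncard_edgeSet_eq_card_edgeFinset, ncard_edgeSet_eq_card_edgeFinset,
    card_edgeFinset_induce_compl_singleton, card_edgeFinset_deleteIncidenceSet,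
    Nat.sub_add_cancel]
  exact G.card_incidenceFinset_eq_degree v ▸ card_le_card (G.incidenceFinset_subset v)

variable [Fintype V] [DecidableRel G.Adj]

theorem exists_isUniversal_of_mul_card_lt_sum_degree {S : Finset V}
    (h : (Fintype.card V - 2) * #S < ∑ u ∈ S, G.degree u) : ∃ u ∈ S, G.IsUniversal u := by
  obtain ⟨u, hu, hlt⟩ := exists_lt_of_sum_lt (f := fun _ => Fintype.card V - 2)
    (by simpa [mul_comm] using h)
  have := G.degree_lt_card_verts u
  exact ⟨u, hu, (G.degree_eq_card_sub_one u).1 (by omega)⟩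

theorem card_edgeFinset_add_three_le [DecidableEq V] {p q r : V} (hpq : p ≠ q) (hpr : p ≠ r)
    (hqr : q ≠ r) (h₁ : ¬G.Adj p q) (h₂ : ¬G.Adj p r) (h₃ : ¬G.Adj q r) :
    #G.edgeFinset + 3 ≤ (Fintype.card V).choose 2 := by
  set T : Finset (Sym2 V) := {s(p, q), s(p, r), s(q, r)}
  have hT : #T = 3 := by
    rw [card_insert_of_notMem, card_insert_of_notMem, card_singleton] <;> simp [*]
  have hdisj : Disjoint G.edgeFinset T := by simp [T, *]
  calc #G.edgeFinset + 3 = #(G.edgeFinset ∪ T) := by rw [card_union_of_disjoint hdisj, hT]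
    _ ≤ #(⊤ : SimpleGraph V).edgeFinset :=
      card_le_card (union_subset (edgeFinset_mono le_top) (by simp [T, insert_subset_iff, *]))
    _ = _ := card_edgeFinset_top_eq_card_choose_two

theorem card_edgeFinset_add_one_eq_degree_add_degree [DecidableEq V] {z o : V}
    (hzo : G.Adj z o) (h : ∀ e ∈ G.edgeSet, z ∈ e ∨ o ∈ e) :
    #G.edgeFinset + 1 = G.degree z + G.degree o := by
  have hunion : G.edgeFinset = G.incidenceFinset z ∪ G.incidenceFinset o := by
    ext e
    simp only [mem_union, mem_incidenceFinset, incidenceSet, Set.mem_ofPred_eq, mem_edgeFinset]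
    grind
  have hinter : G.incidenceFinset z ∩ G.incidenceFinset o = {s(z, o)} := by
    rw [← coe_inj, coe_inter, coe_singleton, coe_incidenceFinset, coe_incidenceFinset,
      G.incidenceSet_inter_incidenceSet_of_adj hzo]
  rw [← card_incidenceFinset_eq_degree, ← card_incidenceFinset_eq_degree,
    ← card_union_add_card_inter, hunion, hinter, card_singleton]

end Counting

section Connectivity

theorem Connected.exists_adj_of_card_lt [Fintype V] (hG : G.Connected) {S : Finset V} {a : V}
    (ha : a ∈ S) (hS : #S < Fintype.card V) : ∃ u ∈ S, ∃ y ∉ S, G.Adj u y := by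
  obtain ⟨b, -, hb⟩ := exists_mem_notMem_of_card_lt_card (t := univ) hS
  obtain ⟨d, -, hd₁, hd₂⟩ := (hG a b).some.exists_boundary_dart (S : Set V) ha hb
  exact ⟨_, hd₁, _, hd₂, d.adj⟩

theorem Connected.induce_compl_singleton_of_pairwise_adj (hG : G.Connected) {v a : V}
    (hva : G.Adj v a) (hN : ∀ ⦃x y⦄, G.Adj v x → G.Adj v y → x ≠ y → G.Adj x y) :
    (G.induce {v}ᶜ).Connected := by
  rw [connected_iff_exists_forall_reachable]
  refine ⟨⟨a, hva.ne'⟩, fun ⟨x, hx⟩ => ?_⟩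
  obtain ⟨p, hp⟩ := hG.exists_isPath v x
  have hnil : ¬p.Nil := p.not_nil_of_ne (Ne.symm hx)
  have htail : ∀ z ∈ p.tail.support, z ∈ ({v}ᶜ : Set V) := by
    have := hp.support_nodup
    rw [← p.cons_support_tail hnil, List.nodup_cons] at this
    exact fun z hz (hzv : z = v) => this.1 (hzv ▸ hz)
  have hs : p.snd ∈ ({v}ᶜ : Set V) := (p.adj_snd hnil).ne'
  have hreach : (G.induce {v}ᶜ).Reachable ⟨p.snd, hs⟩ ⟨x, hx⟩ := ⟨p.tail.induce _ htail⟩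
  rcases eq_or_ne a p.snd with h | h
  · exact h ▸ hreach
  · have hadj : (G.induce {v}ᶜ).Adj ⟨a, hva.ne'⟩ ⟨p.snd, hs⟩ := hN hva (p.adj_snd hnil) h
    exact hadj.reachable.trans hreach

end Connectivity

section Cycles

variable {c₁ c₂ c₃ c₄ c₅ y : V}

theorem hasSpider221_of_cycle5_of_adj (hnd : [c₁, c₂, c₃, c₄, c₅, y].Nodup)
    (h₁₂ : G.Adj c₁ c₂) (h₂₃ : G.Adj c₂ c₃) (h₄₅ : G.Adj c₄ c₅) (h₅₁ : G.Adj c₅ c₁)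
    (hy : G.Adj c₁ y) : G.HasSpider221 :=
  ⟨c₁, c₂, c₃, c₅, c₄, y, by grind [List.nodup_cons], h₁₂, h₂₃, h₅₁.symm, h₄₅.symm, hy⟩

variable [Fintype V]

theorem hasSpider221_of_cycle5 (hG : G.Connected) (hV : 6 ≤ Fintype.card V)
    (hnd : [c₁, c₂, c₃, c₄, c₅].Nodup) (h₁₂ : G.Adj c₁ c₂) (h₂₃ : G.Adj c₂ c₃)
    (h₃₄ : G.Adj c₃ c₄) (h₄₅ : G.Adj c₄ c₅) (h₅₁ : G.Adj c₅ c₁) : G.HasSpider221 := by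
  classical
  obtain ⟨u, hu, y, hy, huy⟩ := hG.exists_adj_of_card_lt (S := {c₁, c₂, c₃, c₄, c₅})
    (mem_insert_self _ _) (card_le_five.trans_lt (by omega))
  simp only [mem_insert, mem_singleton] at hu hy
  rcases hu with rfl | rfl | rfl | rfl | rfl
  · exact hasSpider221_of_cycle5_of_adj (by grind [List.nodup_cons]) h₁₂ h₂₃ h₄₅ h₅₁ huy
  · exact hasSpider221_of_cycle5_of_adj (by grind [List.nodup_cons]) h₂₃ h₃₄ h₅₁ h₁₂ huy
  · exact hasSpider221_of_cycle5_of_adj (by grind [List.nodup_cons]) h₃₄ h₄₅ h₁₂ h₂₃ huy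
  · exact hasSpider221_of_cycle5_of_adj (by grind [List.nodup_cons]) h₄₅ h₅₁ h₂₃ h₃₄ huy
  · exact hasSpider221_of_cycle5_of_adj (by grind [List.nodup_cons]) h₅₁ h₁₂ h₃₄ h₄₅ huy

variable [DecidableRel G.Adj]

theorem hasSpider221_of_cycle4_of_adj (hG : G.Connected) (hV : 6 ≤ Fintype.card V)
    (hδ : ∀ v, 3 ≤ G.degree v) (hnd : [c₁, c₂, c₃, c₄, y].Nodup) (h₁₂ : G.Adj c₁ c₂)
    (h₂₃ : G.Adj c₂ c₃) (h₃₄ : G.Adj c₃ c₄) (h₄₁ : G.Adj c₄ c₁) (hy : G.Adj c₁ y) :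
    G.HasSpider221 := by
  classical
  by_cases hz : ∃ z, G.Adj y z ∧ z ∉ [c₁, c₂, c₃, c₄, y]
  · obtain ⟨z, hyz, hz⟩ := hz
    exact ⟨c₁, y, z, c₂, c₃, c₄, by grind [List.nodup_cons], hy, hyz, h₁₂, h₂₃, h₄₁.symm⟩
  by_cases hy₂ : G.Adj y c₂
  · exact hasSpider221_of_cycle5 hG hV (by grind [List.nodup_cons]) hy₂ h₂₃ h₃₄ h₄₁ hy
  by_cases hy₄ : G.Adj y c₄
  · exact hasSpider221_of_cycle5 hG hV (by grind [List.nodup_cons]) hy₄ h₃₄.symm h₂₃.symm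
      h₁₂.symm hy
  have hN : G.neighborFinset y ⊆ {c₁, c₃} := fun z hyz => by
    rw [mem_neighborFinset] at hyz
    have := hyz.ne
    grind
  have := (card_le_card hN).trans card_le_two
  grind [card_neighborFinset_eq_degree]

theorem hasSpider221_of_cycle4 (hG : G.Connected) (hV : 6 ≤ Fintype.card V)
    (hδ : ∀ v, 3 ≤ G.degree v) (hnd : [c₁, c₂, c₃, c₄].Nodup) (h₁₂ : G.Adj c₁ c₂)
    (h₂₃ : G.Adj c₂ c₃) (h₃₄ : G.Adj c₃ c₄) (h₄₁ : G.Adj c₄ c₁) : G.HasSpider221 := by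
  classical
  obtain ⟨u, hu, y, hy, huy⟩ := hG.exists_adj_of_card_lt (S := {c₁, c₂, c₃, c₄})
    (mem_insert_self _ _) (card_le_four.trans_lt (by omega))
  simp only [mem_insert, mem_singleton] at hu hy
  rcases hu with rfl | rfl | rfl | rfl
  · exact hasSpider221_of_cycle4_of_adj hG hV hδ (by grind [List.nodup_cons]) h₁₂ h₂₃ h₃₄ h₄₁
      huy
  · exact hasSpider221_of_cycle4_of_adj hG hV hδ (by grind [List.nodup_cons]) h₂₃ h₃₄ h₄₁ h₁₂
      huy
  · exact hasSpider221_of_cycle4_of_adj hG hV hδ (by grind [List.nodup_cons]) h₃₄ h₄₁ h₁₂ h₂₃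
      huy
  · exact hasSpider221_of_cycle4_of_adj hG hV hδ (by grind [List.nodup_cons]) h₄₁ h₁₂ h₂₃ h₃₄
      huy

end Cycles

section LongestPath

variable {u w : V} {p : G.Walk u w}

theorem Walk.IsPath.nodup_map_getVert (hp : p.IsPath) {l : List ℕ} (hl : l.Nodup)
    (hle : ∀ i ∈ l, i ≤ p.length) : (l.map p.getVert).Nodup :=
  hl.map_on fun i hi j hj h => hp.getVert_injOn (hle i hi) (hle j hj) h

/-- The centre is `u`, with legs running both ways around the cycle `u x₁ ⋯ xⱼ u`
(`xₖ = p.getVert k`) and the chord `u xᵢ` as the pendant edge; if `xᵢ` is the far end of a leg,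
the chord replaces the first edge of that leg, whose other end becomes the pendant vertex. -/
theorem Walk.IsPath.hasSpider221_of_adj_getVert_of_five_le (hp : p.IsPath) {i j : ℕ}
    (hi : 2 ≤ i) (hil : i ≤ p.length) (hj : 5 ≤ j) (hjl : j ≤ p.length) (hij : i ≠ j)
    (hui : G.Adj u (p.getVert i)) (huj : G.Adj u (p.getVert j)) : G.HasSpider221 := by
  obtain ⟨k, rfl⟩ := Nat.exists_eq_add_of_le' hj
  set s := p.getVert
  have hs (l : ℕ) (hl : l < p.length) : G.Adj (s l) (s (l + 1)) := p.adj_getVert_succ hl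
  have nodup (l : List ℕ) (hl : l.Nodup) (hle : ∀ m ∈ l, m ≤ p.length) : (l.map s).Nodup :=
    hp.nodup_map_getVert hl hle
  rw [← p.getVert_zero] at hui huj
  by_cases hi₂ : i = 2
  · subst hi₂
    exact ⟨_, _, _, _, _, _, nodup [0, 2, 3, k + 5, k + 4, 1] (by simp) (by simp; omega),
      hui, hs 2 (by omega), huj, (hs (k + 4) (by omega)).symm, hs 0 (by omega)⟩
  by_cases hi₄ : i = k + 4
  · subst hi₄
    exact ⟨_, _, _, _, _, _, nodup [0, k + 4, k + 3, 1, 2, k + 5] (by simp) (by simp; omega),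
      hui, (hs (k + 3) (by omega)).symm, hs 0 (by omega), hs 1 (by omega), huj⟩
  · exact ⟨_, _, _, _, _, _, nodup [0, 1, 2, k + 5, k + 4, i] (by simp; omega)
      (by simp; omega), hs 0 (by omega), hs 1 (by omega), huj, (hs (k + 4) (by omega)).symm,
      hui⟩

theorem Walk.IsPath.hasSpider221_of_adj_getVert [Fintype V] [DecidableRel G.Adj]
    (hG : G.Connected) (hV : 6 ≤ Fintype.card V) (hδ : ∀ v, 3 ≤ G.degree v) (hp : p.IsPath)
    {i j : ℕ} (hi : 2 ≤ i) (hil : i ≤ p.length) (hj : 3 ≤ j) (hjl : j ≤ p.length)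
    (hij : i ≠ j) (hui : G.Adj u (p.getVert i)) (huj : G.Adj u (p.getVert j)) :
    G.HasSpider221 := by
  have hs (l : ℕ) (hl : l < p.length) : G.Adj (p.getVert l) (p.getVert (l + 1)) :=
    p.adj_getVert_succ hl
  have hj₀ : G.Adj (p.getVert j) (p.getVert 0) := by rw [p.getVert_zero]; exact huj.symm
  rcases (show j = 3 ∨ j = 4 ∨ 5 ≤ j by omega) with rfl | rfl | hj₅
  · exact hasSpider221_of_cycle4 hG hV hδ (hp.nodup_map_getVert (l := [0, 1, 2, 3]) (by simp)
      (by simp; omega)) (hs 0 (by omega)) (hs 1 (by omega)) (hs 2 (by omega)) hj₀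
  · exact hasSpider221_of_cycle5 hG hV (hp.nodup_map_getVert (l := [0, 1, 2, 3, 4]) (by simp)
      (by simp; omega)) (hs 0 (by omega)) (hs 1 (by omega)) (hs 2 (by omega))
      (hs 3 (by omega)) hj₀
  · exact hp.hasSpider221_of_adj_getVert_of_five_le hi hil hj₅ hjl hij hui huj

theorem Walk.IsPath.exists_getVert_eq_of_adj (hp : p.IsPath)
    (hmax : ∀ (u' w' : V) (q : G.Walk u' w'), q.IsPath → q.length ≤ p.length) {z : V}
    (hz : G.Adj u z) : ∃ i, 1 ≤ i ∧ i ≤ p.length ∧ p.getVert i = z := by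
  have hzp : z ∈ p.support := by
    by_contra h
    simpa using hmax _ _ _ (hp.cons (p := p) (h := hz.symm) h)
  obtain ⟨i, rfl, hi⟩ := Walk.mem_support_iff_exists_getVert.1 hzp
  refine ⟨i, Nat.one_le_iff_ne_zero.2 ?_, hi, rfl⟩
  rintro rfl
  exact hz.ne p.getVert_zero.symm

end LongestPath

theorem hasSpider221_of_forall_three_le_degree [Fintype V] [DecidableRel G.Adj] (hG : G.Connected)
    (hV : 6 ≤ Fintype.card V) (hδ : ∀ v, 3 ≤ G.degree v) : G.HasSpider221 := by
  classical
  have := hG.nonempty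
  obtain ⟨u, w, p, hp, hmax⟩ := Walk.exists_isPath_forall_isPath_length_le_length G
  have : 1 < #((G.neighborFinset u).erase (p.getVert 1)) := by
    have := pred_card_le_card_erase (s := G.neighborFinset u) (a := p.getVert 1)
    have := hδ u
    rw [← card_neighborFinset_eq_degree] at this
    omega
  obtain ⟨a, ha, b, hb, hab⟩ := one_lt_card.1 this
  simp only [mem_erase, mem_neighborFinset] at ha hb
  obtain ⟨i, hi, hil, rfl⟩ := hp.exists_getVert_eq_of_adj hmax ha.2
  obtain ⟨j, hj, hjl, rfl⟩ := hp.exists_getVert_eq_of_adj hmax hb.2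
  have hi₁ : i ≠ 1 := fun h => ha.1 (h ▸ rfl)
  have hj₁ : j ≠ 1 := fun h => hb.1 (h ▸ rfl)
  have hij : i ≠ j := fun h => hab (h ▸ rfl)
  rcases (show 3 ≤ j ∨ 3 ≤ i by omega) with h | h
  · exact hp.hasSpider221_of_adj_getVert hG hV hδ (by omega) hil h hjl hij ha.2 hb.2
  · exact hp.hasSpider221_of_adj_getVert hG hV hδ (by omega) hjl h hil hij.symm hb.2 ha.2

theorem exists_degree_pos_le_two [Fintype V] [DecidableRel G.Adj] (hG : G.Connected)
    (hV : 6 ≤ Fintype.card V) (hS : ¬G.HasSpider221) :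
    ∃ v, 0 < G.degree v ∧ G.degree v ≤ 2 := by
  have : Nontrivial V := Fintype.one_lt_card_iff_nontrivial.1 (by omega)
  by_contra! h
  exact hS <| hasSpider221_of_forall_three_le_degree hG hV fun v =>
    h v (hG.preconnected.degree_pos_of_nontrivial v)

section SixVertices

variable [Fintype V] [DecidableRel G.Adj] {v : V}

theorem exists_adj_ne_isUniversal_induce_compl (hV : Fintype.card V = 6)
    (hv₀ : 0 < G.degree v) (hv : G.degree v ≤ 2) (he : 10 ≤ G.edgeSet.ncard) :
    ∃ x y : ({v}ᶜ : Set V), x ≠ y ∧ G.Adj v x ∧ (G.induce {v}ᶜ).IsUniversal y := by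
  classical
  set H := G.induce {v}ᶜ
  have hW : Fintype.card ({v}ᶜ : Set V) = 5 := by simp [filter_ne', hV]
  have hsum : ∑ u, H.degree u = 2 * H.edgeSet.ncard := by
    rw [ncard_edgeSet_eq_card_edgeFinset, sum_degrees_eq_twice_card_edges]
  have hH : H.edgeSet.ncard + G.degree v = G.edgeSet.ncard :=
    G.ncard_edgeSet_induce_compl_singleton_add_degree v
  have hdeg := G.card_neighborFinset_eq_degree v
  obtain hv₁ | hv₂ : G.degree v = 1 ∨ G.degree v = 2 := by omega
  · obtain ⟨x, hx⟩ := card_eq_one.1 (hdeg.trans hv₁)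
    have hvx : G.Adj v x := by simp [← mem_neighborFinset, hx]
    set x' : ({v}ᶜ : Set V) := ⟨x, hvx.ne'⟩
    have := sum_erase_add univ (fun u => H.degree u) (mem_univ x')
    have := H.degree_lt_card_verts x'
    obtain ⟨y, hy, hyu⟩ := exists_isUniversal_of_mul_card_lt_sum_degree (G := H)
      (S := univ.erase x') (by rw [card_erase_of_mem (mem_univ _), card_univ, hW]; omega)
    exact ⟨x', y, (ne_of_mem_erase hy).symm, hvx, hyu⟩
  · obtain ⟨x₁, x₂, hx₁₂, hx⟩ := card_eq_two.1 (hdeg.trans hv₂)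
    obtain ⟨y, -, hyu⟩ := exists_isUniversal_of_mul_card_lt_sum_degree (G := H)
      (S := univ) (by rw [card_univ, hW]; omega)
    obtain ⟨x, hxN, hxy⟩ : ∃ x ∈ G.neighborFinset v, x ≠ y := by
      by_cases h : x₁ = y
      exacts [⟨x₂, by simp [hx], fun h' => hx₁₂ (h.trans h'.symm)⟩, ⟨x₁, by simp [hx], h⟩]
    rw [mem_neighborFinset] at hxN
    exact ⟨⟨x, hxN.ne'⟩, y, fun h => hxy (congrArg Subtype.val h), hxN, hyu⟩

theorem hasSpider221_of_card_eq_six (hV : Fintype.card V = 6) (hv₀ : 0 < G.degree v)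
    (hv : G.degree v ≤ 2) (he : 10 ≤ G.edgeSet.ncard) : G.HasSpider221 := by
  classical
  set H := G.induce {v}ᶜ
  obtain ⟨x, y, hxy, hvx, hy⟩ := exists_adj_ne_isUniversal_induce_compl hV hv₀ hv he
  have hW : Fintype.card ({v}ᶜ : Set V) = 5 := by simp [filter_ne', hV]
  have h₃ : #((univ.erase x).erase y) = 3 := by
    rw [card_erase_of_mem (mem_erase.2 ⟨hxy.symm, mem_univ y⟩), card_erase_of_mem (mem_univ x),
      card_univ, hW]
  obtain ⟨p, q, r, hpq, hpr, hqr, hpqr⟩ := card_eq_three.1 h₃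
  have hmem (z : ({v}ᶜ : Set V)) (hz : z ∈ ({p, q, r} : Finset _)) : z ≠ x ∧ z ≠ y := by
    rw [← hpqr, mem_erase, mem_erase] at hz
    exact ⟨hz.2.1, hz.1⟩
  have spider (α β γ : ({v}ᶜ : Set V)) (hnd : [y, x, α, β, γ].Nodup) (hαβ : H.Adj α β) :
      G.HasSpider221 := by
    have hval := hnd.map Subtype.val_injective
    have : (x : V) ≠ v ∧ (y : V) ≠ v ∧ (α : V) ≠ v ∧ (β : V) ≠ v ∧ (γ : V) ≠ v :=
      ⟨x.2, y.2, α.2, β.2, γ.2⟩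
    simp only [List.nodup_cons, List.mem_cons, List.not_mem_nil, List.map_cons, List.map_nil,
      or_false, not_or] at hnd hval
    exact ⟨y, x, v, α, β, γ, by grind [List.nodup_cons], hy hnd.1.1, hvx.symm, hy hnd.1.2.1,
      hαβ, hy hnd.1.2.2.2⟩
  obtain ⟨hpx, hpy⟩ := hmem p (by simp)
  obtain ⟨hqx, hqy⟩ := hmem q (by simp)
  obtain ⟨hrx, hry⟩ := hmem r (by simp)
  by_cases hpq' : H.Adj p q
  · exact spider p q r (by grind [List.nodup_cons]) hpq'
  by_cases hpr' : H.Adj p r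
  · exact spider p r q (by grind [List.nodup_cons]) hpr'
  by_cases hqr' : H.Adj q r
  · exact spider q r p (by grind [List.nodup_cons]) hqr'
  have hT := card_edgeFinset_add_three_le hpq hpr hqr hpq' hpr' hqr'
  have hH : H.edgeSet.ncard + G.degree v = G.edgeSet.ncard :=
    G.ncard_edgeSet_induce_compl_singleton_add_degree v
  rw [hW, show Nat.choose 5 2 = 10 from rfl, ← ncard_edgeSet_eq_card_edgeFinset] at hT
  omega

end SixVertices

section Reduction

variable {v a b x y z w : V}

theorem adj_or_eq_of_sup_edge_adj (h : (G ⊔ edge a b).Adj x y) :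
    G.Adj x y ∨ s(x, y) = s(a, b) := by
  rcases h with h | h
  · exact .inl h
  · rw [edge_adj] at h
    exact .inr (Sym2.eq_iff.2 (by tauto))

theorem adj_of_sup_edge_adj_of_ne (h : (G ⊔ edge a b).Adj z w) (e : s(x, y) = s(a, b))
    (hzx : z ≠ x) (hzy : z ≠ y) : G.Adj z w := by
  rcases h with h | h
  · exact h
  · rw [edge_adj] at h
    rw [Sym2.eq_iff] at e
    grind

theorem adj_and_adj_of_eq (hva : G.Adj v a) (hvb : G.Adj v b) (e : s(x, y) = s(a, b)) :
    G.Adj x v ∧ G.Adj v y := by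
  rcases Sym2.eq_iff.1 e with ⟨rfl, rfl⟩ | ⟨rfl, rfl⟩
  exacts [⟨hva.symm, hvb⟩, ⟨hvb.symm, hva⟩]

theorem HasSpider221.of_induce_sup_edge (hva : G.Adj v a) (hvb : G.Adj v b)
    (h : ((G ⊔ edge a b).induce {v}ᶜ).HasSpider221) : G.HasSpider221 := by
  obtain ⟨⟨c, hc⟩, ⟨a₁, ha₁⟩, ⟨a₂, ha₂⟩, ⟨b₁, hb₁⟩, ⟨b₂, hb₂⟩, ⟨d, hd⟩, hnd, h₁, h₂, h₃, h₄,
    h₅⟩ := h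
  replace hnd : [c, a₁, a₂, b₁, b₂, d, v].Nodup := by
    have := hnd.map Subtype.val_injective
    simp only [Set.mem_compl_iff, Set.mem_singleton_iff] at hc ha₁ ha₂ hb₁ hb₂ hd
    simp only [List.map_cons, List.map_nil] at this
    grind [List.nodup_cons]
  simp only [comap_adj, Function.Embedding.subtype_apply] at h₁ h₂ h₃ h₄ h₅
  simp only [List.nodup_cons, List.mem_cons, List.not_mem_nil, or_false, not_or] at hnd
  have hvia {x y : V} (e : s(x, y) = s(a, b)) := adj_and_adj_of_eq hva hvb e
  -- A spider edge equal to `s(a, b)` is replaced by the path through `v`; every other spider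
  -- edge has an end outside `{a, b}`, so it is an edge of `G`.
  rcases adj_or_eq_of_sup_edge_adj h₁ with h₁' | e
  swap
  · exact ⟨c, v, a₁, b₁, b₂, d, by grind [List.nodup_cons], (hvia e).1, (hvia e).2,
      (adj_of_sup_edge_adj_of_ne h₃.symm e (by grind) (by grind)).symm,
      adj_of_sup_edge_adj_of_ne h₄ e (by grind) (by grind),
      (adj_of_sup_edge_adj_of_ne h₅.symm e (by grind) (by grind)).symm⟩
  rcases adj_or_eq_of_sup_edge_adj h₂ with h₂' | e
  swap
  · exact ⟨c, a₁, v, b₁, b₂, d, by grind [List.nodup_cons], h₁', (hvia e).1,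
      adj_of_sup_edge_adj_of_ne h₃ e (by grind) (by grind),
      adj_of_sup_edge_adj_of_ne h₄ e (by grind) (by grind),
      adj_of_sup_edge_adj_of_ne h₅ e (by grind) (by grind)⟩
  rcases adj_or_eq_of_sup_edge_adj h₃ with h₃' | e
  swap
  · exact ⟨c, v, b₁, a₁, a₂, d, by grind [List.nodup_cons], (hvia e).1, (hvia e).2, h₁', h₂',
      (adj_of_sup_edge_adj_of_ne h₅.symm e (by grind) (by grind)).symm⟩
  rcases adj_or_eq_of_sup_edge_adj h₄ with h₄' | e
  swap
  · exact ⟨c, b₁, v, a₁, a₂, d, by grind [List.nodup_cons], h₃', (hvia e).1, h₁', h₂',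
      adj_of_sup_edge_adj_of_ne h₅ e (by grind) (by grind)⟩
  rcases adj_or_eq_of_sup_edge_adj h₅ with h₅' | e
  · exact ⟨c, a₁, a₂, b₁, b₂, d, by grind [List.nodup_cons], h₁', h₂', h₃', h₄', h₅'⟩
  · exact ⟨c, a₁, a₂, b₁, b₂, v, by grind [List.nodup_cons], h₁', h₂', h₃', h₄', (hvia e).1⟩

theorem exists_adj_adj_forall_adj_eq_or_eq [Fintype (G.neighborSet v)] (h₀ : 0 < G.degree v)
    (h₂ : G.degree v ≤ 2) :
    ∃ a b, G.Adj v a ∧ G.Adj v b ∧ ∀ w, G.Adj v w → w = a ∨ w = b := by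
  classical
  rw [← card_neighborFinset_eq_degree] at h₀ h₂
  obtain ⟨a, ha⟩ := card_pos.1 h₀
  have h₁ : #((G.neighborFinset v).erase a) ≤ 1 := by rw [card_erase_of_mem ha]; omega
  rw [mem_neighborFinset] at ha
  rcases ((G.neighborFinset v).erase a).eq_empty_or_nonempty with h | ⟨b, hb⟩
  · refine ⟨a, a, ha, ha, fun w hw => .inl ?_⟩
    by_contra hwa
    simpa [h] using mem_erase.2 ⟨hwa, (mem_neighborFinset ..).2 hw⟩
  · refine ⟨a, b, ha, (mem_neighborFinset ..).1 (mem_of_mem_erase hb), fun w hw => ?_⟩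
    by_cases hwa : w = a
    · exact .inl hwa
    · exact .inr (card_le_one.1 h₁ _ (mem_erase.2 ⟨hwa, (mem_neighborFinset ..).2 hw⟩) _ hb)

theorem exists_connected_not_hasSpider221_of_degree_le_two [Fintype V] [DecidableRel G.Adj]
    (hG : G.Connected) (hS : ¬G.HasSpider221) (h₀ : 0 < G.degree v) (h₂ : G.degree v ≤ 2) :
    ∃ H : SimpleGraph ({v}ᶜ : Set V), H.Connected ∧ ¬H.HasSpider221 ∧
      G.edgeSet.ncard ≤ H.edgeSet.ncard + 2 := by
  classical
  obtain ⟨a, b, hva, hvb, hN⟩ := exists_adj_adj_forall_adj_eq_or_eq h₀ h₂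
  set K := G ⊔ edge a b
  have hKv : ∀ w, K.Adj v w → w = a ∨ w = b := by
    rintro w (h | h)
    · exact hN w h
    · rw [edge_adj] at h
      exact absurd h.1 (by rintro (⟨rfl, -⟩ | ⟨rfl, -⟩) <;> simp_all)
  have hconn : (K.induce {v}ᶜ).Connected :=
    (hG.mono le_sup_left).induce_compl_singleton_of_pairwise_adj (v := v) (Or.inl hva)
      fun x y hx hy hxy => Or.inr <| (edge_adj ..).2 ⟨by grind, hxy⟩
  refine ⟨K.induce {v}ᶜ, hconn, fun h => hS (h.of_induce_sup_edge hva hvb), ?_⟩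
  have hKdeg : K.degree v ≤ 2 := by
    rw [← card_neighborFinset_eq_degree]
    exact (card_le_card fun w hw => by simpa using hKv w ((mem_neighborFinset ..).1 hw)).trans
      card_le_two
  have hK := K.ncard_edgeSet_induce_compl_singleton_add_degree v
  have hGK : G.edgeSet.ncard ≤ K.edgeSet.ncard :=
    Set.ncard_le_ncard (edgeSet_mono le_sup_left) (Set.toFinite _)
  omega

end Reduction

theorem ncard_edgeSet_le_of_not_hasSpider221 {V : Type u} [Fintype V] {G : SimpleGraph V}
    (hV : 6 ≤ Fintype.card V) (hG : G.Connected) (hS : ¬G.HasSpider221) :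
    G.edgeSet.ncard ≤ 2 * Fintype.card V - 3 := by
  suffices ∀ n, 6 ≤ n → ∀ (V : Type u) [Fintype V] (G : SimpleGraph V), Fintype.card V = n →
      G.Connected → ¬G.HasSpider221 → G.edgeSet.ncard ≤ 2 * n - 3 from this _ hV V G rfl hG hS
  intro n hn
  induction n, hn using Nat.le_induction with
  | base =>
    intro V _ G hV hG hS
    classical
    obtain ⟨v, h₀, h₂⟩ := exists_degree_pos_le_two hG hV.ge hS
    by_contra! he
    exact hS (hasSpider221_of_card_eq_six hV h₀ h₂ (by omega))
  | succ n hn ih =>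
    intro V _ G hV hG hS
    classical
    obtain ⟨v, h₀, h₂⟩ := exists_degree_pos_le_two hG (by omega) hS
    obtain ⟨H, hH, hHS, he⟩ := exists_connected_not_hasSpider221_of_degree_le_two hG hS h₀ h₂
    have := ih _ H (by simp [filter_ne', hV]) hH hHS
    omega

section BookGraph

variable {z o : V}

def bookGraph (z o : V) : SimpleGraph V := fromRel fun x _ => x = z ∨ x = o

theorem bookGraph_adj {x y : V} :
    (bookGraph z o).Adj x y ↔ x ≠ y ∧ (x = z ∨ x = o ∨ y = z ∨ y = o) := by
  simp only [bookGraph, fromRel_adj]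
  tauto

theorem isUniversal_bookGraph_left : (bookGraph z o).IsUniversal z := fun _ h =>
  bookGraph_adj.2 ⟨h, .inl rfl⟩

theorem isUniversal_bookGraph_right : (bookGraph z o).IsUniversal o := fun _ h =>
  bookGraph_adj.2 ⟨h, .inr (.inl rfl)⟩

theorem connected_bookGraph : (bookGraph z o).Connected := by
  rw [connected_iff_exists_forall_reachable]
  refine ⟨z, fun w => ?_⟩
  rcases eq_or_ne z w with rfl | h
  exacts [.rfl, (isUniversal_bookGraph_left h).reachable]

theorem not_hasSpider221_bookGraph : ¬(bookGraph z o).HasSpider221 := by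
  rintro ⟨c, a₁, a₂, b₁, b₂, d, hnd, -, h₂, -, h₄, h₅⟩
  rw [bookGraph_adj] at h₂ h₄ h₅
  grind [List.nodup_cons]

theorem ncard_edgeSet_bookGraph [Fintype V] (hzo : z ≠ o) :
    (bookGraph z o).edgeSet.ncard = 2 * Fintype.card V - 3 := by
  classical
  have := (bookGraph z o).degree_eq_card_sub_one z |>.2 isUniversal_bookGraph_left
  have := (bookGraph z o).degree_eq_card_sub_one o |>.2 isUniversal_bookGraph_right
  have := card_edgeFinset_add_one_eq_degree_add_degree (G := bookGraph z o)
    (isUniversal_bookGraph_left hzo) fun e he => by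
      induction e using Sym2.ind with
      | _ x y => grind [mem_edgeSet, bookGraph_adj]
  have : 2 ≤ Fintype.card V := Fintype.one_lt_card_iff.2 ⟨z, o, hzo⟩
  rw [ncard_edgeSet_eq_card_edgeFinset]
  omega

end BookGraph

end SimpleGraph

/-- Theorem: `ex_c(n, S_{2,2,1}) = 2n - 3` for every `n ≥ 6`. -/
theorem exConn_spider221 (n : ℕ) (hn : 6 ≤ n) :
    exConn n spider221 = 2 * n - 3 := by
  refine IsGreatest.csSup_eq ⟨⟨bookGraph ⟨0, by omega⟩ ⟨1, by omega⟩, connected_bookGraph,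
    fun h => not_hasSpider221_bookGraph (containsCopy_spider221_iff.1 h), ?_⟩, ?_⟩
  · rw [ncard_edgeSet_bookGraph (by simp), Fintype.card_fin]
  · rintro m ⟨G, hG, hS, rfl⟩
    simpa using ncard_edgeSet_le_of_not_hasSpider221 (by simpa using hn) hG
      (hS ∘ containsCopy_spider221_iff.2)
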